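/- Define, for r ∈ (−2π, 2π) with r ≠ 0: μ(r) = (2 − 2cos r − r sin r)/r⁴, η(r) = r²(1 − cos r)/(2(r² − 2r sin r − 2cos r + 2)), and γ(r) = r²/(2√(r² − 2r sin r − 2cos r + 2)). Then all three functions extend continuously to [−2π, 2π], the integrals below are finite, and ∫_{−2π}^{2π} γ(r) η(r) μ(r) dr < ∫_{−2π}^{2π} γ(r) μ(r) dr, the right-hand integral being strictly positive. -/

import Mathlib

open MeasureTheory Real

noncomputable section

/-!
With `D r = r² - 2 r sin r - 2 cos r + 2` and `N r = 2 - 2 cos r - r sin r`, the half-angle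
formulas give
`D r = (r - sin r)² + 4 sin⁴ (r/2)`,
`2 D r - r² (1 - cos r) = 8 ((r/2) cos (r/2) - sin (r/2))²` and
`N r = 4 sin (r/2) (sin (r/2) - (r/2) cos (r/2))`.
So `D > 0` away from `0`, `η ≤ 1` everywhere with `η π < 1`, and `μ ≥ 0` on `[-2π, 2π]`
because `x cos x ≤ sin x` on `[0, π]`. The singularities at `0` are removable by L'Hôpital's
rule, so `γ μ (1 - η)` is continuous, nonnegative on `[-2π, 2π]` and positive at `π`.
-/

open Filter Topology Set Function

theorem continuous_update_of_tendsto {X Y : Type*} [TopologicalSpace X] [T1Space X]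
    [DecidableEq X] [TopologicalSpace Y] {f : X → Y} {a : X} {y : Y}
    (hf : ∀ x ≠ a, ContinuousAt f x) (h : Tendsto f (𝓝[≠] a) (𝓝 y)) :
    Continuous (update f a y) :=
  continuous_iff_continuousAt.2 fun x => by
    rcases eq_or_ne x a with rfl | hx
    · exact continuousAt_update_same.2 h
    · exact (continuousAt_update_of_ne hx).2 (hf x hx)

theorem tendsto_div_pow_succ_of_hasDerivAt {f f' : ℝ → ℝ} {n : ℕ} {l : ℝ}
    (hf : ∀ x, HasDerivAt f (f' x) x) (hf0 : f 0 = 0)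
    (h : Tendsto (fun x => f' x / x ^ n) (𝓝[≠] 0) (𝓝 ((n + 1) * l))) :
    Tendsto (fun x => f x / x ^ (n + 1)) (𝓝[≠] 0) (𝓝 l) := by
  have hn : (n + 1 : ℝ) ≠ 0 := by positivity
  refine HasDerivAt.lhopital_zero_nhdsNE (f' := f') (g' := fun x => (n + 1) * x ^ n)
    (.of_forall hf) (.of_forall fun x => by simpa using hasDerivAt_pow (n + 1) x) ?_ ?_ ?_ ?_
  · filter_upwards [self_mem_nhdsWithin] with x hx using mul_ne_zero hn (pow_ne_zero _ hx)
  · simpa [hf0] using (hf 0).continuousAt.tendsto.mono_left nhdsWithin_le_nhds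
  · simpa using ((continuous_pow (n + 1)).tendsto (0 : ℝ)).mono_left nhdsWithin_le_nhds
  · have := h.div_const (n + 1)
    rw [mul_div_cancel_left₀ _ hn] at this
    exact this.congr fun x => by rw [div_div, mul_comm]

theorem tendsto_sin_div_self : Tendsto (fun x => sin x / x) (𝓝[≠] 0) (𝓝 1) := by
  rw [← sinc_zero]
  refine (continuous_sinc.continuousAt.tendsto.mono_left nhdsWithin_le_nhds).congr' ?_
  filter_upwards [self_mem_nhdsWithin] with x hx using sinc_of_ne_zero hx

theorem tendsto_one_sub_cos_div_sq :
    Tendsto (fun x => (1 - cos x) / x ^ 2) (𝓝[≠] 0) (𝓝 (1 / 2)) := by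
  refine tendsto_div_pow_succ_of_hasDerivAt (n := 1) (f' := sin)
    (fun x => by simpa using (hasDerivAt_cos x).const_sub 1) (by simp) ?_
  norm_num
  simpa using tendsto_sin_div_self

theorem tendsto_sin_sub_mul_cos_div_pow_three :
    Tendsto (fun x => (sin x - x * cos x) / x ^ 3) (𝓝[≠] 0) (𝓝 (1 / 3)) := by
  refine tendsto_div_pow_succ_of_hasDerivAt (n := 2) (f' := fun x => x * sin x)
    (fun x => ((hasDerivAt_sin x).sub ((hasDerivAt_id' x).mul (hasDerivAt_cos x))).congr_deriv
      (by ring)) (by simp) ?_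
  norm_num
  refine tendsto_sin_div_self.congr' ?_
  filter_upwards [self_mem_nhdsWithin] with x hx
  field_simp

theorem mul_cos_le_sin {x : ℝ} (h0 : 0 ≤ x) (hx : x ≤ π) : x * cos x ≤ sin x := by
  rcases le_or_gt (cos x) 0 with hc | hc
  · nlinarith [sin_nonneg_of_nonneg_of_le_pi h0 hx]
  · have hx' : x < π / 2 := by
      by_contra! h
      exact (cos_nonpos_of_pi_div_two_le_of_le h (by linarith)).not_gt hc
    have := le_tan h0 hx'
    rwa [tan_eq_sin_div_cos, le_div_iff₀ hc] at this

theorem sin_mul_sin_sub_mul_cos_nonneg {x : ℝ} (hx : |x| ≤ π) :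
    0 ≤ sin x * (sin x - x * cos x) := by
  obtain ⟨hl, hu⟩ := abs_le.1 hx
  rcases le_total 0 x with h0 | h0
  · exact mul_nonneg (sin_nonneg_of_nonneg_of_le_pi h0 hu) (sub_nonneg.2 (mul_cos_le_sin h0 hu))
  · have h := mul_nonneg (sin_nonneg_of_nonneg_of_le_pi (neg_nonneg.2 h0) (by linarith))
      (sub_nonneg.2 (mul_cos_le_sin (neg_nonneg.2 h0) (by linarith)))
    rw [sin_neg, cos_neg] at h
    linarith

theorem setIntegral_Icc_lt_of_continuousOn {f g : ℝ → ℝ} {a b : ℝ} (hab : a < b)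
    (hf : ContinuousOn f (Icc a b)) (hg : ContinuousOn g (Icc a b))
    (hle : ∀ x ∈ Icc a b, f x ≤ g x) (hlt : ∃ c ∈ Icc a b, f c < g c) :
    ∫ x in Icc a b, f x < ∫ x in Icc a b, g x := by
  simpa only [integral_Icc_eq_integral_Ioc, ← intervalIntegral.integral_of_le hab.le] using
    intervalIntegral.integral_lt_integral_of_continuousOn_of_le_of_exists_lt hab hf hg
      (fun x hx => hle x (Ioc_subset_Icc_self hx)) hlt

namespace MuEtaGamma

def denom (r : ℝ) : ℝ := r ^ 2 - 2 * r * sin r - 2 * cos r + 2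

def numer (r : ℝ) : ℝ := 2 - 2 * cos r - r * sin r

def mu : ℝ → ℝ := update (fun r => numer r / r ^ 4) 0 (1 / 12)

def eta : ℝ → ℝ := update (fun r => r ^ 2 * (1 - cos r) / (2 * denom r)) 0 1

def gamma : ℝ → ℝ := update (fun r => r ^ 2 / (2 * √(denom r))) 0 1

@[fun_prop]
theorem continuous_denom : Continuous denom := by unfold denom; fun_prop

@[fun_prop]
theorem continuous_numer : Continuous numer := by unfold numer; fun_prop

theorem denom_eq (r : ℝ) : denom r = (r - sin r) ^ 2 + 4 * sin (r / 2) ^ 4 := by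
  obtain ⟨s, rfl⟩ : ∃ s, r = 2 * s := ⟨r / 2, by ring⟩
  simp only [denom, mul_div_cancel_left₀ s two_ne_zero, sin_two_mul, cos_two_mul]
  nlinarith [sin_sq_add_cos_sq s]

theorem two_mul_denom_sub (r : ℝ) :
    2 * denom r - r ^ 2 * (1 - cos r) = 8 * (r / 2 * cos (r / 2) - sin (r / 2)) ^ 2 := by
  obtain ⟨s, rfl⟩ : ∃ s, r = 2 * s := ⟨r / 2, by ring⟩
  simp only [denom, mul_div_cancel_left₀ s two_ne_zero, sin_two_mul, cos_two_mul]
  nlinarith [sin_sq_add_cos_sq s]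

theorem numer_eq (r : ℝ) :
    numer r = 4 * (sin (r / 2) * (sin (r / 2) - r / 2 * cos (r / 2))) := by
  obtain ⟨s, rfl⟩ : ∃ s, r = 2 * s := ⟨r / 2, by ring⟩
  simp only [numer, mul_div_cancel_left₀ s two_ne_zero, sin_two_mul, cos_two_mul]
  nlinarith [sin_sq_add_cos_sq s]

theorem denom_pos {r : ℝ} (hr : r ≠ 0) : 0 < denom r := by
  have : r - sin r ≠ 0 := sub_ne_zero.2 fun h => (abs_sin_lt_abs hr).ne (by rw [← h])
  rw [denom_eq]
  positivity

theorem tendsto_numer_div_pow_four :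
    Tendsto (fun r => numer r / r ^ 4) (𝓝[≠] 0) (𝓝 (1 / 12)) := by
  refine tendsto_div_pow_succ_of_hasDerivAt (n := 3) (f' := fun x => sin x - x * cos x)
    (fun x => ?_) (by simp [numer]) ?_
  · have := (((hasDerivAt_cos x).const_mul 2).const_sub 2).sub
      ((hasDerivAt_id' x).mul (hasDerivAt_sin x))
    exact this.congr_deriv (by ring)
  · norm_num
    exact tendsto_sin_sub_mul_cos_div_pow_three

theorem tendsto_denom_div_pow_four :
    Tendsto (fun r => denom r / r ^ 4) (𝓝[≠] 0) (𝓝 (1 / 4)) := by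
  refine tendsto_div_pow_succ_of_hasDerivAt (n := 3) (f' := fun x => 2 * x * (1 - cos x))
    (fun x => ?_) (by simp [denom]) ?_
  · have := (((hasDerivAt_pow 2 x).sub (((hasDerivAt_id' x).const_mul 2).mul
      (hasDerivAt_sin x))).sub ((hasDerivAt_cos x).const_mul 2)).add_const 2
    exact this.congr_deriv (by push_cast; ring)
  · have := tendsto_one_sub_cos_div_sq.const_mul 2
    rw [mul_one_div_cancel two_ne_zero] at this
    norm_num
    refine this.congr' ?_
    filter_upwards [self_mem_nhdsWithin] with x hx
    field_simp

theorem continuous_mu : Continuous mu :=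
  continuous_update_of_tendsto (fun x hx => by fun_prop (disch := exact pow_ne_zero 4 hx))
    tendsto_numer_div_pow_four

theorem continuous_eta : Continuous eta := by
  refine continuous_update_of_tendsto
    (fun x hx => by fun_prop (disch := exact (mul_pos two_pos (denom_pos hx)).ne')) ?_
  have := tendsto_one_sub_cos_div_sq.div (tendsto_denom_div_pow_four.const_mul 2) (by norm_num)
  norm_num at this
  refine this.congr' ?_
  filter_upwards [self_mem_nhdsWithin] with r (hr : r ≠ 0)
  have := denom_pos hr
  simp only [Pi.div_apply]
  field_simp

theorem continuous_gamma : Continuous gamma := by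
  refine continuous_update_of_tendsto
    (fun x hx => by fun_prop (disch := exact (mul_pos two_pos (sqrt_pos.2 (denom_pos hx))).ne')) ?_
  have := tendsto_const_nhds (x := (1 : ℝ)).div
    ((continuous_sqrt.tendsto _).comp tendsto_denom_div_pow_four |>.const_mul 2) (by norm_num)
  norm_num at this
  refine this.congr' ?_
  filter_upwards [self_mem_nhdsWithin] with r (hr : r ≠ 0)
  have := sqrt_pos.2 (denom_pos hr)
  rw [Pi.div_apply, sqrt_div' _ (by positivity), show r ^ 4 = (r ^ 2) ^ 2 by ring,
    sqrt_sq (sq_nonneg r)]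
  field_simp

theorem mu_nonneg {r : ℝ} (hr : |r| ≤ 2 * π) : 0 ≤ mu r := by
  rcases eq_or_ne r 0 with rfl | hr0
  · simp [mu]
  rw [mu, update_of_ne hr0, numer_eq]
  have := sin_mul_sin_sub_mul_cos_nonneg (x := r / 2) (by rw [abs_div, abs_two]; linarith)
  positivity

theorem eta_le_one (r : ℝ) : eta r ≤ 1 := by
  rcases eq_or_ne r 0 with rfl | hr0
  · simp [eta]
  rw [eta, update_of_ne hr0, div_le_one (mul_pos two_pos (denom_pos hr0))]
  nlinarith [two_mul_denom_sub r]

theorem gamma_nonneg (r : ℝ) : 0 ≤ gamma r := by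
  rcases eq_or_ne r 0 with rfl | hr0
  · simp [gamma]
  rw [gamma, update_of_ne hr0]
  positivity

theorem mu_pi_pos : 0 < mu π := by
  rw [mu, update_of_ne pi_ne_zero]
  norm_num [numer]
  positivity

theorem gamma_pi_pos : 0 < gamma π := by
  rw [gamma, update_of_ne pi_ne_zero]
  have := sqrt_pos.2 (denom_pos pi_ne_zero)
  positivity

theorem eta_pi_lt_one : eta π < 1 := by
  rw [eta, update_of_ne pi_ne_zero, div_lt_one (mul_pos two_pos (denom_pos pi_ne_zero))]
  have := two_mul_denom_sub π
  norm_num at this ⊢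
  linarith

end MuEtaGamma

open MuEtaGamma in
theorem stmt15 :
    ∃ μ η γ : ℝ → ℝ,
      ContinuousOn μ (Set.Icc (-(2 * π)) (2 * π)) ∧
      ContinuousOn η (Set.Icc (-(2 * π)) (2 * π)) ∧
      ContinuousOn γ (Set.Icc (-(2 * π)) (2 * π)) ∧
      (∀ r ∈ Set.Ioo (-(2 * π)) (2 * π), r ≠ 0 →
        μ r = (2 - 2 * Real.cos r - r * Real.sin r) / r ^ 4) ∧
      (∀ r ∈ Set.Ioo (-(2 * π)) (2 * π), r ≠ 0 →
        η r = r ^ 2 * (1 - Real.cos r) /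
          (2 * (r ^ 2 - 2 * r * Real.sin r - 2 * Real.cos r + 2))) ∧
      (∀ r ∈ Set.Ioo (-(2 * π)) (2 * π), r ≠ 0 →
        γ r = r ^ 2 / (2 * Real.sqrt (r ^ 2 - 2 * r * Real.sin r - 2 * Real.cos r + 2))) ∧
      IntegrableOn (fun r => γ r * η r * μ r) (Set.Icc (-(2 * π)) (2 * π)) volume ∧
      IntegrableOn (fun r => γ r * μ r) (Set.Icc (-(2 * π)) (2 * π)) volume ∧
      0 < ∫ r in Set.Icc (-(2 * π)) (2 * π), γ r * μ r ∧
      (∫ r in Set.Icc (-(2 * π)) (2 * π), γ r * η r * μ r) <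
        ∫ r in Set.Icc (-(2 * π)) (2 * π), γ r * μ r := by
  have hab : -(2 * π) < 2 * π := by linarith [pi_pos]
  have hπ : π ∈ Icc (-(2 * π)) (2 * π) := ⟨by linarith [pi_pos], by linarith [pi_pos]⟩
  have hγμ : Continuous fun r => gamma r * mu r := continuous_gamma.mul continuous_mu
  have hγημ : Continuous fun r => gamma r * eta r * mu r :=
    (continuous_gamma.mul continuous_eta).mul continuous_mu
  have hγμ_nonneg : ∀ r ∈ Icc (-(2 * π)) (2 * π), 0 ≤ gamma r * mu r :=
    fun r hr => mul_nonneg (gamma_nonneg r) (mu_nonneg (abs_le.2 hr))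
  have hγμ_pi : 0 < gamma π * mu π := mul_pos gamma_pi_pos mu_pi_pos
  refine ⟨mu, eta, gamma, continuous_mu.continuousOn, continuous_eta.continuousOn,
    continuous_gamma.continuousOn, fun r _ hr => update_of_ne hr ..,
    fun r _ hr => update_of_ne hr .., fun r _ hr => update_of_ne hr ..,
    hγημ.integrableOn_Icc, hγμ.integrableOn_Icc, ?_, ?_⟩
  · simpa using setIntegral_Icc_lt_of_continuousOn hab continuousOn_const hγμ.continuousOn
      hγμ_nonneg ⟨π, hπ, hγμ_pi⟩
  · refine setIntegral_Icc_lt_of_continuousOn hab hγημ.continuousOn hγμ.continuousOn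
      (fun r hr => ?_) ⟨π, hπ, ?_⟩
    · nlinarith [mul_le_mul_of_nonneg_left (eta_le_one r) (hγμ_nonneg r hr)]
    · nlinarith [mul_lt_mul_of_pos_left eta_pi_lt_one hγμ_pi]
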